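/- arXiv:2502.08210 — 5 statements merged into one kernel-verified Lean document; each statement's English description precedes it below -/
import Mathlib

section
/- For all real x > 0 and y > 0, and z ∈ ℝ: z = √x + √y if and only if x^2 - 2xy + y^2 - 2x z^2 - 2y z^2 + z^4 = 0 ∧ z^3 > (x + y) z ∧ x + y < 3 z^2 ∧ z > 0. -/
theorem isolate_sqrt_add_sqrt (x y : ℝ) (hx : x > 0) (hy : y > 0) (z : ℝ) :
    z = Real.sqrt x + Real.sqrt y ↔
      (x ^ 2 - 2 * x * y + y ^ 2 - 2 * x * z ^ 2 - 2 * y * z ^ 2 + z ^ 4 = 0 ∧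
        z ^ 3 > (x + y) * z ∧ x + y < 3 * z ^ 2 ∧ z > 0) := by
  set a := Real.sqrt x with ha
  set b := Real.sqrt y with hb
  have ha2 : a ^ 2 = x := Real.sq_sqrt hx.le
  have hb2 : b ^ 2 = y := Real.sq_sqrt hy.le
  have hapos : 0 < a := Real.sqrt_pos.mpr hx
  have hbpos : 0 < b := Real.sqrt_pos.mpr hy
  constructor
  · rintro rfl
    refine ⟨by nlinarith, by nlinarith, by nlinarith, by positivity⟩
  · rintro ⟨heq, h1, _, hz⟩
    have hz2 : z ^ 2 > x + y := by
      nlinarith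
    have hfac : (z ^ 2 - (a + b) ^ 2) * (z ^ 2 - (a - b) ^ 2) = 0 := by
      nlinarith
    rcases mul_eq_zero.mp hfac with h | h
    · have hfac2 : (z - (a + b)) * (z + (a + b)) = 0 := by nlinarith
      rcases mul_eq_zero.mp hfac2 with h' | h' <;> linarith
    · exfalso; nlinarith
end

section
/- (Thom's Lemma, univariate case) Let p be a real univariate polynomial of degree d, and let σ : Fin (d+1) → ℝ be a sign choice with values in {-1, 0, 1}. Then the set {x : ℝ | ∀ i ≤ d, sign of the i-th derivative of p at x equals σ i} is either empty, a singleton, or an open interval (i.e., it is a convex subset of ℝ that, if it contains more than one point, is open). -/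
/-!
Induction on `d`: the realization of `σ` on the derivatives of `p` is the realization of
`Fin.tail σ` on the derivatives of `p'`, intersected with a sign level set of `p`. On the former,
`p'` has constant sign, so `p` is monotone or antitone there and its sign level sets are
intervals. The levels `±1` are open; the level `0`, once it has two points, is infinite, which
forces `p = 0`, so that it is the whole (open) interval.
-/

open Polynomial Set

theorem Real.sign_monotone : Monotone Real.sign := by
  intro a b hab
  unfold Real.sign
  split_ifs <;> linarith

theorem Real.isOpen_sign_preimage_singleton {s : ℝ} (hs : s ≠ 0) :
    IsOpen (Real.sign ⁻¹' {s}) := by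
  refine isOpen_iff_mem_nhds.2 fun x (hx : Real.sign x = s) => ?_
  rcases lt_trichotomy x 0 with hneg | rfl | hpos
  · filter_upwards [Iio_mem_nhds hneg] with y (hy : y < 0)
    rw [mem_preimage, mem_singleton_iff, ← hx, Real.sign_of_neg hneg, Real.sign_of_neg hy]
  · exact absurd (hx.symm.trans Real.sign_zero) hs
  · filter_upwards [Ioi_mem_nhds hpos] with y (hy : 0 < y)
    rw [mem_preimage, mem_singleton_iff, ← hx, Real.sign_of_pos hpos, Real.sign_of_pos hy]

theorem Real.nonneg_of_sign_nonneg {r : ℝ} (h : 0 ≤ Real.sign r) : 0 ≤ r := by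
  by_contra! hr
  rw [Real.sign_of_neg hr] at h
  norm_num at h

theorem Real.nonpos_of_sign_nonpos {r : ℝ} (h : Real.sign r ≤ 0) : r ≤ 0 := by
  by_contra! hr
  rw [Real.sign_of_pos hr] at h
  norm_num at h

theorem Set.OrdConnected.infinite_of_nontrivial {α : Type*} [LinearOrder α] [DenselyOrdered α]
    {s : Set α} (hs : s.OrdConnected) (hnt : s.Nontrivial) : s.Infinite := by
  obtain ⟨a, ha, b, hb, hab⟩ := hnt
  rcases hab.lt_or_gt with h | h
  · exact (Icc_infinite h).mono (hs.out ha hb)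
  · exact (Icc_infinite h).mono (hs.out hb ha)

def IsOpenIntervalOrSubsingleton (S : Set ℝ) : Prop :=
  Convex ℝ S ∧ (¬ S.Subsingleton → IsOpen S)

theorem Polynomial.monotoneOn_or_antitoneOn_eval_of_sign_derivative_eq {C : Set ℝ}
    (hC : Convex ℝ C) {p : ℝ[X]} {c : ℝ} (hc : ∀ x ∈ C, Real.sign (p.derivative.eval x) = c) :
    MonotoneOn p.eval C ∨ AntitoneOn p.eval C := by
  have hcont := p.continuous.continuousOn (s := C)
  have hdiff := p.differentiable.differentiableOn (s := interior C)
  rcases le_total 0 c with hc0 | hc0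
  · refine .inl <| monotoneOn_of_deriv_nonneg hC hcont hdiff fun x hx => ?_
    rw [Polynomial.deriv]
    exact Real.nonneg_of_sign_nonneg ((hc x (interior_subset hx)).symm ▸ hc0)
  · refine .inr <| antitoneOn_of_deriv_nonpos hC hcont hdiff fun x hx => ?_
    rw [Polynomial.deriv]
    exact Real.nonpos_of_sign_nonpos ((hc x (interior_subset hx)).symm ▸ hc0)

theorem Convex.inter_sign_eq_of_monotoneOn_or_antitoneOn {C : Set ℝ} (hC : Convex ℝ C)
    {f : ℝ → ℝ} (hf : MonotoneOn f C ∨ AntitoneOn f C) (s : ℝ) :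
    Convex ℝ (C ∩ {x | Real.sign (f x) = s}) := by
  rw [convex_iff_ordConnected]
  obtain ⟨u, hu, hCu⟩ : ∃ u, u.OrdConnected ∧ C ∩ (Real.sign ∘ f) ⁻¹' {s} = C ∩ u := by
    rcases hf with hmono | hanti
    · exact ordConnected_singleton.preimage_monotoneOn (Real.sign_monotone.comp_monotoneOn hmono)
    · exact ordConnected_singleton.preimage_antitoneOn (Real.sign_monotone.comp_antitoneOn hanti)
  change (C ∩ (Real.sign ∘ f) ⁻¹' {s}).OrdConnected
  rw [hCu]
  exact hC.ordConnected.inter hu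

theorem IsOpenIntervalOrSubsingleton.inter_sign_eval_eq {C : Set ℝ}
    (hC : IsOpenIntervalOrSubsingleton C) {p : ℝ[X]} {c : ℝ}
    (hc : ∀ x ∈ C, Real.sign (p.derivative.eval x) = c) (s : ℝ) :
    IsOpenIntervalOrSubsingleton (C ∩ {x | Real.sign (p.eval x) = s}) := by
  obtain ⟨hCconv, hCopen⟩ := hC
  by_cases hCs : C.Subsingleton
  · have hTs := hCs.anti (inter_subset_left (t := {x | Real.sign (p.eval x) = s}))
    exact ⟨hTs.convex, fun h => (h hTs).elim⟩
  have hTconv := hCconv.inter_sign_eq_of_monotoneOn_or_antitoneOn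
    (p.monotoneOn_or_antitoneOn_eval_of_sign_derivative_eq hCconv hc) s
  refine ⟨hTconv, fun hTs => ?_⟩
  by_cases hs : s = 0
  · subst hs
    have hp : p = 0 := p.eq_zero_of_infinite_isRoot <|
      (hTconv.ordConnected.infinite_of_nontrivial (not_subsingleton_iff.1 hTs)).mono
        fun x hx => Real.sign_eq_zero_iff.1 hx.2
    simpa [hp] using hCopen hCs
  · exact (hCopen hCs).inter ((Real.isOpen_sign_preimage_singleton hs).preimage p.continuous)

theorem isOpenIntervalOrSubsingleton_univ : IsOpenIntervalOrSubsingleton univ :=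
  ⟨convex_univ, fun _ => isOpen_univ⟩

def derivSignRealization (p : ℝ[X]) (d : ℕ) (σ : Fin (d + 1) → ℝ) : Set ℝ :=
  {x | ∀ i : Fin (d + 1), Real.sign ((derivative^[(i : ℕ)] p).eval x) = σ i}

theorem derivSignRealization_zero (p : ℝ[X]) (σ : Fin 1 → ℝ) :
    derivSignRealization p 0 σ = univ ∩ {x | Real.sign (p.eval x) = σ 0} := by
  ext x
  simp [derivSignRealization, Fin.forall_fin_one]

theorem derivSignRealization_succ (p : ℝ[X]) (d : ℕ) (σ : Fin (d + 2) → ℝ) :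
    derivSignRealization p (d + 1) σ =
      derivSignRealization (derivative p) d (Fin.tail σ) ∩ {x | Real.sign (p.eval x) = σ 0} := by
  ext x
  simp only [derivSignRealization, mem_ofPred_eq, mem_inter_iff, Fin.forall_fin_succ,
    Fin.val_zero, Fin.val_succ, Function.iterate_zero, id_eq, Function.iterate_succ_apply,
    Fin.tail]
  exact and_comm

theorem isOpenIntervalOrSubsingleton_derivSignRealization {p : ℝ[X]} {d : ℕ}
    (hp : p.natDegree ≤ d) (σ : Fin (d + 1) → ℝ) :
    IsOpenIntervalOrSubsingleton (derivSignRealization p d σ) := by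
  induction d generalizing p with
  | zero =>
    rw [derivSignRealization_zero]
    refine isOpenIntervalOrSubsingleton_univ.inter_sign_eval_eq (c := 0) (fun x _ => ?_) _
    rw [derivative_of_natDegree_zero (Nat.le_zero.1 hp), eval_zero, Real.sign_zero]
  | succ d ih =>
    rw [derivSignRealization_succ]
    exact (ih ((natDegree_derivative_le p).trans (by omega)) _).inter_sign_eval_eq
      (fun x hx => hx 0) (σ 0)

theorem thom_lemma_univariate_general (p : Polynomial ℝ) (d : ℕ) (hd : p.natDegree = d)
    (σ : Fin (d + 1) → ℝ) :
    let S := {x : ℝ | ∀ i : Fin (d + 1),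
      Real.sign ((Polynomial.derivative^[(i : ℕ)] p).eval x) = σ i}
    Convex ℝ S ∧ (¬ S.Subsingleton → IsOpen S) :=
  isOpenIntervalOrSubsingleton_derivSignRealization hd.le σ

theorem thom_lemma_univariate (p : Polynomial ℝ) (d : ℕ) (hd : p.natDegree = d)
    (σ : Fin (d + 1) → ℝ) (hσ : ∀ i, σ i = -1 ∨ σ i = 0 ∨ σ i = 1) :
    let S := {x : ℝ | ∀ i : Fin (d + 1),
      Real.sign ((Polynomial.derivative^[(i : ℕ)] p).eval x) = σ i}
    Convex ℝ S ∧ (¬ S.Subsingleton → IsOpen S) :=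
  thom_lemma_univariate_general p d hd σ
end

section
/- If p and q are nonzero polynomials over a field with degrees d and e respectively in the variable x, then the resultant res_x(p, q) vanishes if (and, when the leading coefficients are units, only if) p and q have a common root in an algebraically closed extension. -/
/-!
The matrix `sylvesterMatrix` is Mathlib's `Polynomial.sylvester` transposed, with both index
orders reversed, so `resultant` agrees with `Polynomial.resultant`. Over a field, the resultant of
two polynomials, not both zero, vanishes exactly when they are not coprime, and over an
algebraically closed extension non-coprimality means a common root.
-/

/-- The Sylvester matrix of `p` and `q`, where `p` is treated as having degree `d`
and `q` as having degree `e`. Its first `e` rows are shifted copies of the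
coefficients of `p`, and its next `d` rows are shifted copies of the coefficients of `q`. -/
noncomputable def sylvesterMatrix {R : Type*} [CommRing R] (d e : ℕ)
    (p q : Polynomial R) : Matrix (Fin (e + d)) (Fin (e + d)) R :=
  Matrix.of fun i j =>
    if (i : ℕ) < e then
      (if (j : ℕ) ≤ d + (i : ℕ) ∧ (i : ℕ) ≤ (j : ℕ) then p.coeff (d + (i : ℕ) - (j : ℕ)) else 0)
    else
      (if (j : ℕ) ≤ (i : ℕ) ∧ (i : ℕ) - e ≤ (j : ℕ) then q.coeff (e + ((i : ℕ) - e) - (j : ℕ)) else 0)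

/-- The resultant of `p` and `q`: the determinant of their Sylvester matrix. -/
noncomputable def resultant {R : Type*} [CommRing R] (p q : Polynomial R) : R :=
  (sylvesterMatrix p.natDegree q.natDegree p q).det

theorem Polynomial.sylvester_eq_submatrix_transpose_sylvesterMatrix {R : Type*} [CommRing R]
    (d e : ℕ) (p q : Polynomial R) :
    Polynomial.sylvester p q d e =
      (sylvesterMatrix d e p q).transpose.submatrix ((finCongr (add_comm d e)).trans Fin.revPerm)
        ((finCongr (add_comm d e)).trans Fin.revPerm) := by
  ext i j
  have hi := i.isLt
  induction j using Fin.addCases <;>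
  · simp only [Polynomial.sylvester, sylvesterMatrix, Matrix.of_apply, Matrix.submatrix_apply,
      Matrix.transpose_apply, Equiv.trans_apply, finCongr_apply, Fin.revPerm_apply,
      Fin.addCases_left, Fin.addCases_right, Fin.val_rev, Fin.val_cast, Fin.val_castAdd,
      Fin.val_natAdd, Set.mem_Icc]
    split_ifs <;> first | rfl | omega | (congr 1; omega)

theorem resultant_eq_polynomial_resultant {R : Type*} [CommRing R] (p q : Polynomial R) :
    resultant p q = Polynomial.resultant p q := by
  rw [Polynomial.resultant, Polynomial.sylvester_eq_submatrix_transpose_sylvesterMatrix,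
    Matrix.det_submatrix_equiv_self, Matrix.det_transpose, resultant]

theorem resultant_eq_zero_iff_common_root_general {K A : Type*} [Field K] [Field A]
    [IsAlgClosed A] [Algebra K A] (p q : Polynomial K) (hp : p ≠ 0) :
    resultant p q = 0 ↔ ∃ a : A, Polynomial.aeval a p = 0 ∧ Polynomial.aeval a q = 0 := by
  rw [resultant_eq_polynomial_resultant, Polynomial.resultant_eq_zero_iff,
    Polynomial.isCoprime_iff_aeval_ne_zero_of_isAlgClosed (k := K) A]
  simp [hp]

/-- Over a field, the resultant of two nonzero polynomials vanishes iff they have a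
common root in an algebraically closed extension (the leading coefficients of nonzero
polynomials over a field are units). -/
theorem resultant_eq_zero_iff_common_root {K A : Type*} [Field K] [Field A]
    [IsAlgClosed A] [Algebra K A] (p q : Polynomial K) (hp : p ≠ 0) (hq : q ≠ 0) :
    resultant p q = 0 ↔ ∃ a : A, Polynomial.aeval a p = 0 ∧ Polynomial.aeval a q = 0 :=
  resultant_eq_zero_iff_common_root_general p q hp
end

section
/- Let p, q ∈ ℚ[x, y] be bivariate polynomials with degrees d_{p,x}, d_{p,y} in x, y (and similarly for q). Then the degree in y of res_x(p, q) is at most d_{p,y} · d_{q,x} + d_{p,x} · d_{q,y}. -/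
lemma natDegree_det_le_sum {R : Type*} [CommRing R] {n : ℕ}
    (M : Matrix (Fin n) (Fin n) (Polynomial R)) (b : Fin n → ℕ)
    (h : ∀ i j, (M i j).natDegree ≤ b i) :
    M.det.natDegree ≤ ∑ i, b i := by
  rw [Matrix.det_apply]
  apply Polynomial.natDegree_sum_le_of_forall_le
  intro σ _
  calc (Equiv.Perm.sign σ • ∏ i, M (σ i) i).natDegree
      ≤ (∏ i, M (σ i) i).natDegree := by
        rcases Int.units_eq_one_or (Equiv.Perm.sign σ) with h1 | h1 <;> simp [h1]
    _ ≤ ∑ i, (M (σ i) i).natDegree := Polynomial.natDegree_prod_le _ _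
    _ ≤ ∑ i, b (σ i) := Finset.sum_le_sum fun i _ => h _ _
    _ = ∑ i, b i := Equiv.sum_comp σ b

/-- Degree bound for resultants: if `p, q ∈ ℚ[x][y]` (viewed as polynomials in `x` with
coefficients in `ℚ[y]`), then the `y`-degree of `res_x(p,q)` is at most
`d_{p,y} d_{q,x} + d_{p,x} d_{q,y}`. -/
theorem resultant_natDegree_bound (p q : Polynomial (Polynomial ℚ))
    (dpx dpy dqx dqy : ℕ) (hpx : p.natDegree = dpx) (hqx : q.natDegree = dqx)
    (hpy : ∀ i, (p.coeff i).natDegree ≤ dpy)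
    (hqy : ∀ i, (q.coeff i).natDegree ≤ dqy) :
    (resultant p q).natDegree ≤ dpy * dqx + dpx * dqy := by
  unfold resultant
  rw [hpx, hqx]
  have key := natDegree_det_le_sum (sylvesterMatrix dpx dqx p q)
      (fun i => if (i : ℕ) < dqx then dpy else dqy) ?_
  · refine key.trans (le_of_eq ?_)
    rw [Fin.sum_univ_eq_sum_range (fun i => if i < dqx then dpy else dqy)]
    rw [Finset.range_eq_Ico, ← Finset.sum_Ico_consecutive _ (Nat.zero_le dqx) (Nat.le_add_right dqx dpx)]
    rw [Finset.sum_congr rfl (fun i hi => if_pos (Finset.mem_Ico.mp hi).2),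
        Finset.sum_congr rfl (g := fun _ => dqy)
          (fun i hi => if_neg (not_lt.mpr (Finset.mem_Ico.mp hi).1))]
    simp [Finset.sum_const, Nat.card_Ico, mul_comm]
  · intro i j
    simp only [sylvesterMatrix, Matrix.of_apply]
    split_ifs with h1 h2 h3
    · simpa using hpy _
    · simp
    · simpa using hqy _
    · simp
end

section
/- Let f : ℝ → ℝ with defining polynomial p(z, x) (so p(f(x), x) = 0 for all x, p of positive degree in z with nonvanishing leading coefficient), and let r be a positive integer. Then the polynomial q(z, x) = res_t(z^r - t, p(t, x)) satisfies q(g(x), x) = 0 whenever g(x)^r = f(x). -/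
/-- Evaluate a bivariate polynomial `p(z,x)`, represented as a polynomial in `z` with
coefficients in `ℝ[x]`, at the point `(z, x)`. -/
noncomputable def biEval (p : Polynomial (Polynomial ℝ)) (z x : ℝ) : ℝ :=
  (p.eval (Polynomial.C z)).eval x

lemma row_sum {K : Type*} [CommRing K] (u : Polynomial K) (a : K) (N c m : ℕ)
    (hc : c = u.natDegree + m) (hcN : c < N) :
    ∑ j : Fin N, (if (j : ℕ) ≤ c ∧ m ≤ (j : ℕ) then u.coeff (c - (j : ℕ)) else 0) *
        a ^ (N - 1 - (j : ℕ))
      = a ^ (N - 1 - c) * u.eval a := by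
  rw [Fin.sum_univ_eq_sum_range
    (fun j => (if j ≤ c ∧ m ≤ j then u.coeff (c - j) else 0) * a ^ (N - 1 - j)) N]
  have h1 : ∀ j : ℕ, (if j ≤ c ∧ m ≤ j then u.coeff (c - j) else 0) * a ^ (N - 1 - j)
      = if j ∈ Finset.Icc m c then u.coeff (c - j) * a ^ (N - 1 - j) else 0 := by
    intro j
    by_cases h : j ∈ Finset.Icc m c
    · simp only [Finset.mem_Icc] at h
      rw [if_pos ⟨h.2, h.1⟩, if_pos]
      simp [Finset.mem_Icc, h.1, h.2]
    · simp only [Finset.mem_Icc, not_and_or, not_le] at h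
      rw [if_neg, if_neg] <;> simp [Finset.mem_Icc] <;> omega
  simp only [h1]
  rw [Finset.sum_ite_mem, Finset.inter_eq_right.mpr
    (by intro j hj; simp only [Finset.mem_Icc] at hj; simp [Finset.mem_range]; omega)]
  rw [← Finset.Ico_add_one_right_eq_Icc, Finset.sum_Ico_eq_sum_range]
  have hn : c + 1 - m = u.natDegree + 1 := by omega
  rw [hn, ← Finset.sum_range_reflect]
  rw [Polynomial.eval_eq_sum_range, Finset.mul_sum]
  refine Finset.sum_congr rfl fun k hk => ?_
  simp only [Finset.mem_range] at hk
  have h2 : c - (m + (u.natDegree + 1 - 1 - k)) = k := by omega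
  have h3 : N - 1 - (m + (u.natDegree + 1 - 1 - k)) = (N - 1 - c) + k := by omega
  rw [h2, h3, pow_add]; ring

lemma resultant_eq_zero_of_common_root {K : Type*} [Field K] (p q : Polynomial K)
    (hd : 0 < p.natDegree) (a : K) (hpa : p.eval a = 0) (hqa : q.eval a = 0) :
    resultant p q = 0 := by
  classical
  set d := p.natDegree with hdd
  set e := q.natDegree with hee
  rw [resultant, ← Matrix.exists_mulVec_eq_zero_iff]
  refine ⟨fun j => a ^ (e + d - 1 - (j : ℕ)), ?_, ?_⟩
  · intro h
    have h1 : a ^ (e + d - 1 - ((⟨e + d - 1, by omega⟩ : Fin (e + d)) : ℕ)) = 0 :=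
      congrFun h ⟨e + d - 1, by omega⟩
    simp at h1
  · funext i
    show ∑ j, sylvesterMatrix d e p q i j * a ^ (e + d - 1 - (j : ℕ)) = 0
    unfold sylvesterMatrix
    simp only [Matrix.of_apply]
    by_cases hi : (i : ℕ) < e
    · simp only [if_pos hi]
      rw [row_sum p a (e + d) (d + (i : ℕ)) (i : ℕ) (by omega) (by omega), hpa, mul_zero]
    · simp only [if_neg hi]
      push_neg at hi
      have he : e + ((i : ℕ) - e) = (i : ℕ) := by omega
      rw [he]
      rw [row_sum q a (e + d) (i : ℕ) ((i : ℕ) - e) (by omega) (by omega), hqa, mul_zero]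

lemma map_sylvester {R S : Type*} [CommRing R] [CommRing S] (φ : R →+* S)
    (d e : ℕ) (p q : Polynomial R) :
    (sylvesterMatrix d e p q).map φ = sylvesterMatrix d e (p.map φ) (q.map φ) := by
  ext i j
  simp [sylvesterMatrix, Matrix.map, apply_ite φ, Polynomial.coeff_map]

lemma map_resultant {R S : Type*} [CommRing R] [CommRing S] (φ : R →+* S)
    (p q : Polynomial R) (hp : (p.map φ).natDegree = p.natDegree)
    (hq : (q.map φ).natDegree = q.natDegree) :
    φ (resultant p q) = resultant (p.map φ) (q.map φ) := by
  rw [resultant, resultant, hp, hq, RingHom.map_det, RingHom.mapMatrix_apply, map_sylvester]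

/-- The radical rule: `res_t(z^r - t, p(t, x))` is a defining polynomial of an
`r`-th root of `f`. -/
theorem resultant_radical_rule (f : ℝ → ℝ) (p : Polynomial (Polynomial ℝ))
    (hpdeg : 0 < p.natDegree) (hplead : ∀ x : ℝ, p.leadingCoeff.eval x ≠ 0)
    (hp : ∀ x : ℝ, biEval p (f x) x = 0) (r : ℕ) (hr : 0 < r) :
    -- q(z, x) = res_t( z^r - t, p(t, x) ), both viewed as polynomials in t over ℝ[x][z]
    let Zr : Polynomial (Polynomial (Polynomial ℝ)) :=
      Polynomial.C (Polynomial.X) ^ r - Polynomial.X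
    let P : Polynomial (Polynomial (Polynomial ℝ)) :=
      p.eval₂ ((Polynomial.C : Polynomial (Polynomial ℝ) →+* _).comp Polynomial.C)
        Polynomial.X
    let q : Polynomial (Polynomial ℝ) := resultant Zr P
    ∀ (g : ℝ → ℝ) (x : ℝ), g x ^ r = f x → biEval q (g x) x = 0 := by
  intro Zr P q g x hgx
  set z := g x with hz
  set φ : Polynomial (Polynomial ℝ) →+* ℝ :=
    (Polynomial.evalRingHom x).comp (Polynomial.evalRingHom (Polynomial.C z)) with hφ
  have hP : P = p.map (Polynomial.C : Polynomial ℝ →+* Polynomial (Polynomial ℝ)) := rfl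
  have hPdeg : P.natDegree = p.natDegree := by
    rw [hP]; exact Polynomial.natDegree_map_eq_of_injective Polynomial.C_injective p
  have hZr : Zr = Polynomial.C (Polynomial.X ^ r) - Polynomial.X := by
    show Polynomial.C Polynomial.X ^ r - Polynomial.X = _
    rw [map_pow]
  have hns : ∀ c : Polynomial (Polynomial ℝ),
      (Polynomial.C c - Polynomial.X).natDegree = 1 := by
    intro c
    rw [show Polynomial.C c - Polynomial.X = -(Polynomial.X - Polynomial.C c) from
      by ring, Polynomial.natDegree_neg, Polynomial.natDegree_X_sub_C]
  have hZrdeg : Zr.natDegree = 1 := by rw [hZr, hns]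
  have hZrmap : Zr.map φ = Polynomial.C (f x) - Polynomial.X := by
    rw [hZr, Polynomial.map_sub, Polynomial.map_C, Polynomial.map_X]
    congr 1
    have : φ (Polynomial.X ^ r) = z ^ r := by
      simp [hφ]
    rw [this, hgx]
  have hZm_deg : (Zr.map φ).natDegree = 1 := by
    rw [hZrmap]
    rw [show Polynomial.C (f x) - Polynomial.X = -(Polynomial.X - Polynomial.C (f x)) from
      by ring, Polynomial.natDegree_neg, Polynomial.natDegree_X_sub_C]
  have hPmap : P.map φ = p.map (Polynomial.evalRingHom x) := by
    have hcomp : φ.comp (Polynomial.C : Polynomial ℝ →+* Polynomial (Polynomial ℝ))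
        = Polynomial.evalRingHom x := RingHom.ext fun a => by simp [hφ]
    rw [hP, Polynomial.map_map, hcomp]
  have hPm_deg : (P.map φ).natDegree = P.natDegree := by
    rw [hPmap, hPdeg]
    exact Polynomial.natDegree_map_of_leadingCoeff_ne_zero _ (by simpa using hplead x)
  have hA : (Zr.map φ).eval (f x) = 0 := by rw [hZrmap]; simp
  have hbi : ∀ c : ℝ, (p.map (Polynomial.evalRingHom x)).eval c = biEval p c x := by
    intro c
    rw [Polynomial.eval_map, biEval]
    show _ = (Polynomial.evalRingHom x) (Polynomial.eval₂ (RingHom.id _) (Polynomial.C c) p)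
    rw [Polynomial.hom_eval₂]
    simp
  have hB : (P.map φ).eval (f x) = 0 := by
    rw [hPmap, hbi]; exact hp x
  have hq0 : φ (resultant Zr P) = 0 := by
    rw [map_resultant φ Zr P (by rw [hZm_deg, hZrdeg]) hPm_deg]
    exact resultant_eq_zero_of_common_root _ _ (by rw [hZm_deg]; omega) (f x) hA hB
  exact hq0
end
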